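/- arXiv:2009.00396 — 2 statements merged into one kernel-verified Lean document; each statement's English description precedes it below -/
import Mathlib

section
/- Let M be a spectral space and B a commutative ring. Then the B-module Cons(M, B) of B-valued constructible functions on M is generated by the indicator functions of closed constructible subsets of M. -/
/-- A spectral space: quasi-compact, quasi-separated, sober, and the
quasi-compact open subsets form a basis of the topology. -/
def SpectralSpaceDef (X : Type*) [TopologicalSpace X] : Prop :=
  CompactSpace X ∧ QuasiSeparatedSpace X ∧ QuasiSober X ∧ T0Space X ∧
    TopologicalSpace.IsTopologicalBasis {U : Set X | IsOpen U ∧ IsCompact U}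

/-- The constructible subsets: the smallest class of subsets containing the
quasi-compact open subsets and stable under complements and finite unions
(hence also finite intersections). -/
inductive IsConstr {X : Type*} [TopologicalSpace X] : Set X → Prop
  | qcOpen : ∀ U : Set X, IsOpen U → IsCompact U → IsConstr U
  | compl : ∀ A : Set X, IsConstr A → IsConstr Aᶜ
  | union : ∀ A B : Set X, IsConstr A → IsConstr B → IsConstr (A ∪ B)

/-- A constructible function: there is a finite partition of the space into
locally closed constructible subsets on each of which the function is constant. -/
def IsConsFun {X : Type*} [TopologicalSpace X] {B : Type*} (φ : X → B) : Prop :=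
  ∃ (n : ℕ) (P : Fin n → Set X),
    (∀ i, IsLocallyClosed (P i) ∧ IsConstr (P i)) ∧
    (∀ x, ∃! i, x ∈ P i) ∧
    ∀ i, ∀ x ∈ P i, ∀ y ∈ P i, φ x = φ y

/-!
A constructible function is a finite `B`-linear combination of the indicators of the pieces of
its partition, and conversely sums and multiples of constructible functions are constructible, by
refining partitions. Indicators of constructible sets are reached from those of closed
constructible sets: the span of the latter is a subalgebra, as `1_Z * 1_Z' = 1_{Z ∩ Z'}`, and
`1_{Aᶜ} = 1 - 1_A`, `1_{A ∪ C} = 1 - 1_{Aᶜ} 1_{Cᶜ}`.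
-/

open Set

section

variable {X : Type*}

section Partition

variable {B : Type*} [Semiring B]

lemma indicator_mem_span_indicator_one {P : Set X} {φ : X → B}
    (hφ : ∀ x ∈ P, ∀ y ∈ P, φ x = φ y) :
    P.indicator φ ∈ Submodule.span B {P.indicator 1} := by
  rcases P.eq_empty_or_nonempty with rfl | ⟨x₀, hx₀⟩
  · simp
  · refine Submodule.mem_span_singleton.mpr ⟨φ x₀, funext fun x => ?_⟩
    by_cases hx : x ∈ P
    · simp [hx, hφ x hx x₀ hx₀]
    · simp [hx]

lemma mem_span_range_indicator_of_partition {ι : Type*} [Fintype ι]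
    {P : ι → Set X} (hpart : ∀ x, ∃! i, x ∈ P i) {φ : X → B}
    (hφ : ∀ i, ∀ x ∈ P i, ∀ y ∈ P i, φ x = φ y) :
    φ ∈ Submodule.span B (range fun i => (P i).indicator 1) := by
  have hdisj : ((Finset.univ : Finset ι) : Set ι).PairwiseDisjoint P :=
    fun i _ j _ hij => disjoint_left.mpr fun {x} hi hj => hij ((hpart x).unique hi hj)
  have hcover : ⋃ i, P i = univ := iUnion_eq_univ_iff.mpr fun x => (hpart x).exists
  have hsum : φ = ∑ i, (P i).indicator φ := by
    funext x
    simpa [hcover] using congrFun (Finset.indicator_biUnion _ P (f := φ) hdisj) x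
  rw [hsum]
  exact Submodule.sum_mem _ fun i _ => Submodule.span_mono
    (singleton_subset_iff.mpr (mem_range_self i)) (indicator_mem_span_indicator_one (hφ i))

end Partition

variable [TopologicalSpace X]

namespace IsConstr

lemma inter {A C : Set X} (hA : IsConstr A) (hC : IsConstr C) : IsConstr (A ∩ C) := by
  simpa [compl_union] using compl _ (union _ _ (compl _ hA) (compl _ hC))

lemma univ : IsConstr (univ : Set X) := by
  simpa using compl _ (qcOpen ∅ isOpen_empty isCompact_empty)

end IsConstr

namespace IsConsFun

variable {B C D : Type*}

lemma const (b : B) : IsConsFun (fun _ : X => b) :=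
  ⟨1, fun _ => Set.univ, fun _ => ⟨isOpen_univ.isLocallyClosed, IsConstr.univ⟩,
    fun _ => ⟨0, trivial, fun i _ => Subsingleton.elim i 0⟩, fun _ _ _ _ _ => rfl⟩

lemma comp {φ : X → B} (hφ : IsConsFun φ) (g : B → C) : IsConsFun (g ∘ φ) := by
  obtain ⟨n, P, hP, hpart, hconst⟩ := hφ
  exact ⟨n, P, hP, hpart, fun i x hx y hy => congrArg g (hconst i x hx y hy)⟩

lemma map₂ {φ : X → B} {ψ : X → C} (op : B → C → D) (hφ : IsConsFun φ) (hψ : IsConsFun ψ) :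
    IsConsFun (fun x => op (φ x) (ψ x)) := by
  obtain ⟨n, P, hP, hPpart, hPconst⟩ := hφ
  obtain ⟨m, Q, hQ, hQpart, hQconst⟩ := hψ
  set e := (finProdFinEquiv (m := n) (n := m)).symm
  refine ⟨n * m, fun k => P (e k).1 ∩ Q (e k).2,
    fun k => ⟨(hP _).1.inter (hQ _).1, (hP _).2.inter (hQ _).2⟩, fun x => ?_,
    fun k x hx y hy => by simp only [hPconst _ x hx.1 y hy.1, hQconst _ x hx.2 y hy.2]⟩
  obtain ⟨i, hi, hi_unique⟩ := hPpart x
  obtain ⟨j, hj, hj_unique⟩ := hQpart x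
  refine ⟨e.symm (i, j), by simpa using And.intro hi hj, fun k hk => ?_⟩
  rw [e.eq_symm_apply]
  exact Prod.ext (hi_unique _ hk.1) (hj_unique _ hk.2)

lemma indicator_one_of_isClosed [Zero B] [One B] {Z : Set X} (hZ : IsClosed Z)
    (hZc : IsConstr Z) : IsConsFun (Z.indicator (1 : X → B)) := by
  refine ⟨2, ![Z, Zᶜ], Fin.forall_fin_two.mpr ⟨⟨hZ.isLocallyClosed, hZc⟩,
    ⟨hZ.isOpen_compl.isLocallyClosed, IsConstr.compl _ hZc⟩⟩, fun x => ?_,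
    Fin.forall_fin_two.mpr ⟨fun x hx y hy => ?_, fun x hx y hy => ?_⟩⟩
  · by_cases hx : x ∈ Z
    · exact ⟨0, hx, fun i hi => by fin_cases i <;> simp_all⟩
    · exact ⟨1, hx, fun i hi => by fin_cases i <;> simp_all⟩
  all_goals simp_all

end IsConsFun

variable (X) in
def consFunSubmodule (B : Type*) [Semiring B] : Submodule B (X → B) where
  carrier := {φ | IsConsFun φ}
  zero_mem' := IsConsFun.const 0
  add_mem' hφ hψ := IsConsFun.map₂ (· + ·) hφ hψ
  smul_mem' c _ hφ := hφ.comp (c * ·)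

section Indicators

variable {B : Type*}

lemma IsConsFun.mem_span_indicators [Semiring B] {φ : X → B} (hφ : IsConsFun φ) :
    φ ∈ Submodule.span B ((fun A => A.indicator 1) '' {A : Set X | IsConstr A}) := by
  obtain ⟨n, P, hP, hpart, hconst⟩ := hφ
  exact Submodule.span_mono (range_subset_iff.mpr fun i => mem_image_of_mem _ (hP i).2)
    (mem_span_range_indicator_of_partition hpart hconst)

variable (X B) in
def closedConstrIndicators [MulZeroOneClass B] : Submonoid (X → B) where
  carrier := {f | ∃ Z : Set X, IsClosed Z ∧ IsConstr Z ∧ f = Z.indicator 1}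
  one_mem' := ⟨univ, isClosed_univ, IsConstr.univ, (indicator_univ 1).symm⟩
  mul_mem' := by
    rintro _ _ ⟨Z, hZ, hZc, rfl⟩ ⟨Z', hZ', hZ'c, rfl⟩
    exact ⟨Z ∩ Z', hZ.inter hZ', hZc.inter hZ'c, inter_indicator_one.symm⟩

lemma indicator_one_mem_of_isConstr [CommRing B] (T : Subalgebra B (X → B))
    (hT : ∀ U : Set X, IsOpen U → IsCompact U → Uᶜ.indicator 1 ∈ T) {A : Set X}
    (hA : IsConstr A) : A.indicator 1 ∈ T := by
  have compl_mem {A : Set X} (h : A.indicator 1 ∈ T) : Aᶜ.indicator 1 ∈ T := by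
    rw [indicator_compl]
    exact T.sub_mem T.one_mem h
  induction hA with
  | qcOpen U hU hUc => simpa using compl_mem (hT U hU hUc)
  | compl A _ ih => exact compl_mem ih
  | union A C _ _ ihA ihC =>
    rw [← compl_compl (A ∪ C), compl_union]
    refine compl_mem ?_
    rw [inter_indicator_one]
    exact T.mul_mem (compl_mem ihA) (compl_mem ihC)

lemma span_indicators_le_span_closedConstrIndicators [CommRing B] :
    Submodule.span B ((fun A => A.indicator 1) '' {A : Set X | IsConstr A}) ≤
      Submodule.span B (closedConstrIndicators X B : Set (X → B)) := by
  rw [← Submonoid.closure_eq (closedConstrIndicators X B), ← Algebra.adjoin_eq_span,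
    Submodule.span_le]
  rintro _ ⟨A, hA, rfl⟩
  refine indicator_one_mem_of_isConstr _ (fun U hU hUc => Algebra.subset_adjoin ?_) hA
  exact ⟨Uᶜ, hU.isClosed_compl, IsConstr.compl _ (IsConstr.qcOpen U hU hUc), rfl⟩

end Indicators

end

theorem consFun_span_indicators_general
    {M : Type*} [TopologicalSpace M] (B : Type*) [CommRing B] :
    (Submodule.span B
        {f : M → B | ∃ Z : Set M, IsClosed Z ∧ IsConstr Z ∧
          f = Set.indicator Z (fun _ => (1 : B))} : Set (M → B)) =
      {φ : M → B | IsConsFun φ} := by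
  refine Subset.antisymm ?_ fun φ hφ => span_indicators_le_span_closedConstrIndicators
    hφ.mem_span_indicators
  change Submodule.span B _ ≤ consFunSubmodule M B
  rw [Submodule.span_le]
  rintro _ ⟨Z, hZ, hZc, rfl⟩
  exact IsConsFun.indicator_one_of_isClosed hZ hZc

/-- The `B`-module of `B`-valued constructible functions on a spectral space is generated
by the indicator functions of closed constructible subsets. -/
theorem consFun_span_indicators
    {M : Type*} [TopologicalSpace M] (hM : SpectralSpaceDef M) (B : Type*) [CommRing B] :
    (Submodule.span B
        {f : M → B | ∃ Z : Set M, IsClosed Z ∧ IsConstr Z ∧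
          f = Set.indicator Z (fun _ => (1 : B))} : Set (M → B)) =
      {φ : M → B | IsConsFun φ} :=
  consFun_span_indicators_general B
end

section
/- Every locally closed constructible subset of a spectral space, with the subspace topology, is a spectral space. -/
/-- A spectral space: quasi-compact, quasi-separated, sober, and the
quasi-compact open subsets form a basis of the topology. -/
def SpectralSpaceProp (X : Type*) [TopologicalSpace X] : Prop :=
  CompactSpace X ∧ QuasiSeparatedSpace X ∧ QuasiSober X ∧ T0Space X ∧
    TopologicalSpace.IsTopologicalBasis {U : Set X | IsOpen U ∧ IsCompact U}

/-! Since the quasi-compact opens form a basis, every constructible set is a finite union of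
sets `U \ V` with `U`, `V` quasi-compact open, hence quasi-compact. So a constructible `W` meets
every quasi-compact open in a quasi-compact set: the inclusion `W → M` is a spectral embedding,
and such an embedding pulls back the basis of quasi-compact opens and quasi-separatedness.
Sobriety passes to locally closed subsets. -/

open Set Topology TopologicalSpace

section

variable {X Y : Type*} [TopologicalSpace X] [TopologicalSpace Y]

theorem spectralSpaceProp_iff : SpectralSpaceProp X ↔ SpectralSpace X :=
  ⟨fun ⟨_, _, _, _, h⟩ => { isTopologicalBasis := h },
    fun _ => ⟨inferInstance, inferInstance, inferInstance, inferInstance,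
      PrespectralSpace.isTopologicalBasis⟩⟩

theorem IsConstr.isConstructible [QuasiSeparatedSpace X] {s : Set X} (hs : IsConstr s) :
    IsConstructible s := by
  induction hs with
  | qcOpen U hU hUc => exact hUc.isConstructible hU
  | compl s _ ih => exact ih.compl
  | union s t _ _ hs ht => exact hs.union ht

theorem Topology.IsConstructible.isCompact [CompactSpace X] [QuasiSeparatedSpace X]
    [PrespectralSpace X] {s : Set X} (hs : IsConstructible s) : IsCompact s := by
  let ι := {U : Set X // IsOpen U ∧ IsCompact U}
  have : Nonempty ι := ⟨⟨∅, isOpen_empty, isCompact_empty⟩⟩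
  have basis : IsTopologicalBasis (range ((↑) : ι → Set X)) := by
    rw [Subtype.range_coe_subtype]; exact PrespectralSpace.isTopologicalBasis
  induction s, hs using
    IsConstructible.induction_of_isTopologicalBasis _ basis (fun U => U.2.2) with
  | sdiff U _ _ => exact U.2.2.diff (isOpen_biUnion fun V _ => V.2.1)
  | union _ _ _ _ hs ht => exact hs.union ht

theorem Topology.IsConstructible.isRetrocompact [CompactSpace X] [QuasiSeparatedSpace X]
    [PrespectralSpace X] {s : Set X} (hs : IsConstructible s) : IsRetrocompact s :=
  fun _ hU hUo => (hs.inter (hU.isConstructible hUo)).isCompact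

theorem QuasiSeparatedSpace.of_isInducing [PrespectralSpace Y] [QuasiSeparatedSpace Y]
    (f : X → Y) (hf : IsInducing f) (hf' : IsSpectralMap f) : QuasiSeparatedSpace X := by
  have basis := (PrespectralSpace.isTopologicalBasis (X := Y)).isInducing hf
  rw [image_eq_range] at basis
  refine .of_isTopologicalBasis basis fun U V => ?_
  rw [← preimage_inter]
  exact hf'.isCompact_preimage_of_isOpen (U.2.1.inter V.2.1)
    (U.2.2.inter_of_isOpen V.2.2 U.2.1 V.2.1)

theorem IsLocallyClosed.quasiSober [QuasiSober X] {s : Set X} (hs : IsLocallyClosed s) :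
    QuasiSober s := by
  obtain ⟨U, Z, hU, hZ, rfl⟩ := hs
  have := hU.isOpenEmbedding_subtypeVal.quasiSober
  exact .inter_of_isClosed_of_quasiSober_left U hZ

theorem IsRetrocompact.spectralSpace [SpectralSpace X] {s : Set X} (hs : IsRetrocompact s)
    (hs' : IsLocallyClosed s) : SpectralSpace s :=
  have hval := IsRetrocompact_iff_isSpectralMap_subtypeVal.mp hs
  { toCompactSpace := isCompact_iff_compactSpace.mp hs.isCompact
    toQuasiSober := hs'.quasiSober
    toQuasiSeparatedSpace := .of_isInducing _ IsInducing.subtypeVal hval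
    toPrespectralSpace := .of_isInducing _ IsInducing.subtypeVal hval }

end

/-- A locally closed constructible subset of a spectral space is spectral for the
subspace topology. -/
theorem spectralSpace_of_locallyClosed_constructible
    {M : Type*} [TopologicalSpace M] (hM : SpectralSpaceProp M)
    (W : Set M) (hW : IsLocallyClosed W) (hWc : IsConstr W) :
    SpectralSpaceProp W := by
  rw [spectralSpaceProp_iff] at hM ⊢
  exact hWc.isConstructible.isRetrocompact.spectralSpace hW
end
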